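/- Let G₃ be the group presented by generators a, b and relators a², (ab²)², (bab)², (b²a)². Then the homomorphism σ₃ from G₃ to the group of affine equivalences of ℝ² determined by σ₃(a)(x,y) = (2 − x, 1 − y), σ₃(b)(x,y) = (1 + x, 2 + x − y) is well defined (the images satisfy the relators) and injective. -/
import Mathlib


noncomputable section

abbrev Aff := (ℝ × ℝ) ≃ᵃ[ℝ] (ℝ × ℝ)

def LB : (ℝ × ℝ) ≃ₗ[ℝ] (ℝ × ℝ) :=
  LinearEquiv.ofInvolutive
    { toFun := fun p => (p.1, p.1 - p.2)
      map_add' := by intro p q; simp [Prod.ext_iff]; ring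
      map_smul' := by intro c p; simp [Prod.ext_iff]; ring }
    (fun p => by simp [Prod.ext_iff])

def A3 : Aff := (LinearEquiv.neg ℝ).toAffineEquiv.trans (AffineEquiv.constVAdd ℝ (ℝ×ℝ) (2,1))
def B3 : Aff := LB.toAffineEquiv.trans (AffineEquiv.constVAdd ℝ (ℝ×ℝ) (1,2))

theorem hA (p : ℝ × ℝ) : A3 p = (2 - p.1, 1 - p.2) := by
  show ((2:ℝ),(1:ℝ)) +ᵥ (-p) = _
  simp [Prod.ext_iff, sub_eq_add_neg]

theorem hB (p : ℝ × ℝ) : B3 p = (1 + p.1, 2 + p.1 - p.2) := by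
  show ((1:ℝ),(2:ℝ)) +ᵥ (p.1, p.1 - p.2) = _
  simp [Prod.ext_iff]; ring

theorem mulap (e e' : Aff) (p : ℝ × ℝ) : (e * e') p = e (e' p) := rfl
theorem oneap (p : ℝ × ℝ) : (1 : Aff) p = p := rfl
theorem cvap (w p : ℝ × ℝ) : AffineEquiv.constVAdd ℝ (ℝ×ℝ) w p = w + p := rfl

theorem affext {e e' : Aff} (h : ∀ p, e p = e' p) : e = e' :=
  DFunLike.ext _ _ h

theorem eA : A3 * A3 = 1 :=
  affext fun p => by simp [mulap, hA, oneap, Prod.ext_iff]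

theorem eU : B3 * B3 = AffineEquiv.constVAdd ℝ (ℝ×ℝ) (2,1) :=
  affext fun p => by simp [mulap, hB, cvap, Prod.ext_iff]; exact ⟨by ring, by ring⟩

theorem eV : (A3 * B3) * (A3 * B3) = AffineEquiv.constVAdd ℝ (ℝ×ℝ) (0,-3) :=
  affext fun p => by simp [mulap, hA, hB, cvap, Prod.ext_iff]; exact ⟨by ring, by ring⟩

theorem e2 : (A3 * (B3 * B3)) * (A3 * (B3 * B3)) = 1 :=
  affext fun p => by simp [mulap, hA, hB, oneap, Prod.ext_iff]; exact ⟨by ring, by ring⟩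

theorem e3 : (B3 * A3 * B3) * (B3 * A3 * B3) = 1 :=
  affext fun p => by simp [mulap, hA, hB, oneap, Prod.ext_iff]; exact ⟨by ring, by ring⟩

theorem e4 : ((B3 * B3) * A3) * ((B3 * B3) * A3) = 1 :=
  affext fun p => by simp [mulap, hA, hB, oneap, Prod.ext_iff]; exact ⟨by ring, by ring⟩


theorem pzs (w : ℝ×ℝ) (m : ℤ) (p : ℝ×ℝ) :
    ((AffineEquiv.constVAdd ℝ (ℝ×ℝ) w)^m) p = ((m:ℝ) * w.1 + p.1, (m:ℝ)*w.2 + p.2) := by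
  rw [← AffineEquiv.constVAdd_zsmul]
  show m • w + p = _
  simp [Prod.ext_iff, Prod.smul_fst, Prod.smul_snd, zsmul_eq_mul]

abbrev R3 : Set (FreeGroup (Fin 2)) :=
  {FreeGroup.of 0 ^ 2, (FreeGroup.of 0 * FreeGroup.of 1 ^ 2) ^ 2,
   (FreeGroup.of 1 * FreeGroup.of 0 * FreeGroup.of 1) ^ 2,
   (FreeGroup.of 1 ^ 2 * FreeGroup.of 0) ^ 2}

def f3 : Fin 2 → Aff := ![A3, B3]

theorem hrel : ∀ r ∈ R3, FreeGroup.lift f3 r = 1 := by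
  intro r hr
  simp only [R3, Set.mem_insert_iff, Set.mem_singleton_iff] at hr
  rcases hr with rfl | rfl | rfl | rfl
  · simp only [map_pow, FreeGroup.lift_apply_of, f3, Matrix.cons_val_zero]
    rw [pow_two]; exact eA
  · simp only [map_pow, map_mul, FreeGroup.lift_apply_of, f3, Matrix.cons_val_zero,
      Matrix.cons_val_one, Matrix.head_cons]
    rw [pow_two, pow_two]; exact e2
  · simp only [map_pow, map_mul, FreeGroup.lift_apply_of, f3, Matrix.cons_val_zero,
      Matrix.cons_val_one, Matrix.head_cons]
    rw [pow_two]; exact e3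
  · simp only [map_pow, map_mul, FreeGroup.lift_apply_of, f3, Matrix.cons_val_zero,
      Matrix.cons_val_one, Matrix.head_cons]
    rw [pow_two, pow_two]; exact e4

def σ3 : PresentedGroup R3 →* Aff := PresentedGroup.toGroup hrel

theorem σof0 : σ3 (PresentedGroup.of 0) = A3 := by
  rw [σ3, PresentedGroup.toGroup.of]; simp [f3]

theorem σof1 : σ3 (PresentedGroup.of 1) = B3 := by
  rw [σ3, PresentedGroup.toGroup.of]; simp [f3]

theorem pgrel (r : FreeGroup (Fin 2)) (hr : r ∈ R3) : PresentedGroup.mk R3 r = 1 :=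
  (QuotientGroup.eq_one_iff _).mpr (Subgroup.subset_normalClosure hr)

theorem pg1 : (PresentedGroup.of 0 : PresentedGroup R3) * PresentedGroup.of 0 = 1 := by
  have h := pgrel (FreeGroup.of 0 ^ 2) (by simp)
  rw [pow_two, map_mul] at h
  exact h

theorem pg2 : ((PresentedGroup.of 0 : PresentedGroup R3) * PresentedGroup.of 1 ^ 2) ^ 2 = 1 := by
  have h := pgrel ((FreeGroup.of 0 * FreeGroup.of 1 ^ 2) ^ 2) (by simp)
  rw [map_pow, map_mul, map_pow] at h
  exact h

theorem pg3 : ((PresentedGroup.of 1 : PresentedGroup R3) * PresentedGroup.of 0 * PresentedGroup.of 1) ^ 2 = 1 := by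
  have h := pgrel ((FreeGroup.of 1 * FreeGroup.of 0 * FreeGroup.of 1) ^ 2) (by simp)
  rw [map_pow, map_mul, map_mul] at h
  exact h

theorem hcl (g : PresentedGroup R3) :
    g ∈ Subgroup.closure ({PresentedGroup.of 0, PresentedGroup.of 1} : Set (PresentedGroup R3)) := by
  have h : Subgroup.closure ({PresentedGroup.of 0, PresentedGroup.of 1} :
      Set (PresentedGroup R3)) = ⊤ := by
    apply le_antisymm le_top
    rw [← PresentedGroup.closure_range_of R3]
    apply Subgroup.closure_mono
    rintro x ⟨i, rfl⟩
    fin_cases i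
    · exact Set.mem_insert _ _
    · exact Set.mem_insert_of_mem _ rfl
  rw [h]; trivial

theorem step_lemma {G : Type*} [Group G] {u v : G} (huv : Commute u v)
    (m n k l : ℤ) (w w' t : G) (h : w * t = u ^ k * v ^ l * w') :
    u ^ m * v ^ n * w * t = u ^ (m + k) * v ^ (n + l) * w' := by
  have hc : u ^ k * v ^ n = v ^ n * u ^ k := (huv.zpow_zpow k n).eq
  calc u ^ m * v ^ n * w * t = u ^ m * v ^ n * (w * t) := by rw [mul_assoc]
    _ = u ^ m * v ^ n * (u ^ k * v ^ l * w') := by rw [h]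
    _ = u ^ m * (v ^ n * u ^ k) * (v ^ l * w') := by group
    _ = u ^ m * (u ^ k * v ^ n) * (v ^ l * w') := by rw [hc]
    _ = u ^ (m + k) * v ^ (n + l) * w' := by group

theorem nf {G : Type*} [Group G] {a b : G}
    (h1 : a * a = 1) (h2 : (a * b ^ 2) ^ 2 = 1) (h3 : (b * a * b) ^ 2 = 1)
    {g : G} (hg : g ∈ Subgroup.closure ({a, b} : Set G)) :
    ∃ m n : ℤ,
      g = (b ^ 2) ^ m * ((a * b) ^ 2) ^ n * 1 ∨
      g = (b ^ 2) ^ m * ((a * b) ^ 2) ^ n * a ∨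
      g = (b ^ 2) ^ m * ((a * b) ^ 2) ^ n * b ∨
      g = (b ^ 2) ^ m * ((a * b) ^ 2) ^ n * (a * b) := by
  have ha' : a⁻¹ = a := inv_eq_of_mul_eq_one_right h1
  have hau : a * b ^ 2 * a = (b ^ 2)⁻¹ := by
    have e : (a * b ^ 2) * (a * b ^ 2) = 1 := by rw [← pow_two]; exact h2
    calc a * b ^ 2 * a = ((a * b ^ 2) * (a * b ^ 2)) * (b ^ 2)⁻¹ := by (try simp only [pow_two]); group
      _ = (b ^ 2)⁻¹ := by rw [e, one_mul]
  have hav : a * (a * b) ^ 2 * a = ((a * b) ^ 2)⁻¹ := by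
    have e : (b * a) ^ 2 * (a * b) ^ 2 = (b * a * b) * (a * a) * (b * a * b) := by (try simp only [pow_two]); group
    rw [h1, mul_one, ← pow_two, h3] at e
    have hba2 : (b * a) ^ 2 = ((a * b) ^ 2)⁻¹ := eq_inv_of_mul_eq_one_left e
    calc a * (a * b) ^ 2 * a = (a * a) * ((b * a) ^ 2) := by (try simp only [pow_two]); group
      _ = (b * a) ^ 2 := by rw [h1, one_mul]
      _ = ((a * b) ^ 2)⁻¹ := hba2
  have hbab : (b * a * b)⁻¹ = b * a * b :=
    inv_eq_of_mul_eq_one_right (by rw [← pow_two]; exact h3)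
  have hbv : b * (a * b) ^ 2 * b⁻¹ = ((a * b) ^ 2)⁻¹ := by
    calc b * (a * b) ^ 2 * b⁻¹ = (b * a * b) * a := by (try simp only [pow_two]); group
      _ = (b * a * b)⁻¹ * a⁻¹ := by rw [hbab, ha']
      _ = ((a * b) ^ 2)⁻¹ := by (try simp only [pow_two]); group
  have huv : Commute (b ^ 2) ((a * b) ^ 2) := by
    have e : b ^ 2 * (a * b) ^ 2 * (b ^ 2)⁻¹ = b * (b * (a * b) ^ 2 * b⁻¹) * b⁻¹ := by (try simp only [pow_two]); group
    rw [hbv] at e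
    have e2 : b * ((a * b) ^ 2)⁻¹ * b⁻¹ = (b * (a * b) ^ 2 * b⁻¹)⁻¹ := by (try simp only [pow_two]); group
    rw [e2, hbv, inv_inv] at e
    show b ^ 2 * (a * b) ^ 2 = (a * b) ^ 2 * b ^ 2
    conv_rhs => rw [← e]
    (try simp only [pow_two]); group
  -- translation table
  have t1a : (1 : G) * a = (b ^ 2) ^ (0:ℤ) * ((a * b) ^ 2) ^ (0:ℤ) * a := by (try simp only [pow_two]); group
  have taa : a * a = (b ^ 2) ^ (0:ℤ) * ((a * b) ^ 2) ^ (0:ℤ) * 1 := by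
    rw [h1]; (try simp only [pow_two]); group
  have tba : b * a = (b ^ 2) ^ (1:ℤ) * ((a * b) ^ 2) ^ (-1:ℤ) * (a * b) := by
    conv_lhs => rw [← ha']
    (try simp only [pow_two]); group
  have tca : (a * b) * a = (b ^ 2) ^ (-1:ℤ) * ((a * b) ^ 2) ^ (1:ℤ) * b := by
    calc (a * b) * a = a * (b * a) := by (try simp only [pow_two]); group
      _ = a * ((b ^ 2) ^ (1:ℤ) * ((a * b) ^ 2) ^ (-1:ℤ) * (a * b)) := by rw [tba]
      _ = (a * b ^ 2 * a) * ((a * (a * b) ^ 2 * a)⁻¹) * ((a * a) * b) := by (try simp only [pow_two]); group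
      _ = ((b ^ 2)⁻¹) * (((a * b) ^ 2)⁻¹)⁻¹ * (1 * b) := by rw [hau, hav, h1]
      _ = (b ^ 2) ^ (-1:ℤ) * ((a * b) ^ 2) ^ (1:ℤ) * b := by (try simp only [pow_two]); group
  have t1b : (1 : G) * b = (b ^ 2) ^ (0:ℤ) * ((a * b) ^ 2) ^ (0:ℤ) * b := by (try simp only [pow_two]); group
  have tab : a * b = (b ^ 2) ^ (0:ℤ) * ((a * b) ^ 2) ^ (0:ℤ) * (a * b) := by (try simp only [pow_two]); group
  have tbb : b * b = (b ^ 2) ^ (1:ℤ) * ((a * b) ^ 2) ^ (0:ℤ) * 1 := by (try simp only [pow_two]); group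
  have tcb : (a * b) * b = (b ^ 2) ^ (-1:ℤ) * ((a * b) ^ 2) ^ (0:ℤ) * a := by
    calc (a * b) * b = (a * b ^ 2 * a) * a⁻¹ := by (try simp only [pow_two]); group
      _ = (b ^ 2)⁻¹ * a⁻¹ := by rw [hau]
      _ = (b ^ 2) ^ (-1:ℤ) * ((a * b) ^ 2) ^ (0:ℤ) * a := by rw [ha']; (try simp only [pow_two]); group
  have t1a' : (1 : G) * a⁻¹ = (b ^ 2) ^ (0:ℤ) * ((a * b) ^ 2) ^ (0:ℤ) * a := by
    rw [ha']; (try simp only [pow_two]); group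
  have taa' : a * a⁻¹ = (b ^ 2) ^ (0:ℤ) * ((a * b) ^ 2) ^ (0:ℤ) * 1 := by (try simp only [pow_two]); group
  have tba' : b * a⁻¹ = (b ^ 2) ^ (1:ℤ) * ((a * b) ^ 2) ^ (-1:ℤ) * (a * b) := by (try simp only [pow_two]); group
  have tca' : (a * b) * a⁻¹ = (b ^ 2) ^ (-1:ℤ) * ((a * b) ^ 2) ^ (1:ℤ) * b := by
    rw [ha']; exact tca
  have t1b' : (1 : G) * b⁻¹ = (b ^ 2) ^ (-1:ℤ) * ((a * b) ^ 2) ^ (0:ℤ) * b := by (try simp only [pow_two]); group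
  have tab' : a * b⁻¹ = (b ^ 2) ^ (1:ℤ) * ((a * b) ^ 2) ^ (0:ℤ) * (a * b) := by
    have hau2 : b ^ 2 = a⁻¹ * (b ^ 2)⁻¹ * a⁻¹ := by
      calc b ^ 2 = a⁻¹ * (a * b ^ 2 * a) * a⁻¹ := by (try simp only [pow_two]); group
        _ = a⁻¹ * (b ^ 2)⁻¹ * a⁻¹ := by rw [hau]
    calc a * b⁻¹ = a⁻¹ * b⁻¹ := by rw [ha']
      _ = (a⁻¹ * (b ^ 2)⁻¹ * a⁻¹) * (a * b) := by (try simp only [pow_two]); group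
      _ = b ^ 2 * (a * b) := by rw [← hau2]
      _ = (b ^ 2) ^ (1:ℤ) * ((a * b) ^ 2) ^ (0:ℤ) * (a * b) := by (try simp only [pow_two]); group
  have tbb' : b * b⁻¹ = (b ^ 2) ^ (0:ℤ) * ((a * b) ^ 2) ^ (0:ℤ) * 1 := by (try simp only [pow_two]); group
  have tcb' : (a * b) * b⁻¹ = (b ^ 2) ^ (0:ℤ) * ((a * b) ^ 2) ^ (0:ℤ) * a := by (try simp only [pow_two]); group
  induction hg using Subgroup.closure_induction_right with
  | one => exact ⟨0, 0, Or.inl (by (try simp only [pow_two]); group)⟩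
  | mul_right x hx y hy ih =>
    obtain ⟨m, n, H⟩ := ih
    simp only [Set.mem_insert_iff, Set.mem_singleton_iff] at hy
    rcases hy with rfl | rfl
    · rcases H with rfl | rfl | rfl | rfl
      · exact ⟨m + 0, n + 0, Or.inr (Or.inl (step_lemma huv m n 0 0 _ _ _ t1a))⟩
      · exact ⟨m + 0, n + 0, Or.inl (step_lemma huv m n 0 0 _ _ _ taa)⟩
      · exact ⟨m + 1, n + (-1), Or.inr (Or.inr (Or.inr (step_lemma huv m n 1 (-1) _ _ _ tba)))⟩
      · exact ⟨m + (-1), n + 1, Or.inr (Or.inr (Or.inl (step_lemma huv m n (-1) 1 _ _ _ tca)))⟩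
    · rcases H with rfl | rfl | rfl | rfl
      · exact ⟨m + 0, n + 0, Or.inr (Or.inr (Or.inl (step_lemma huv m n 0 0 _ _ _ t1b)))⟩
      · exact ⟨m + 0, n + 0, Or.inr (Or.inr (Or.inr (step_lemma huv m n 0 0 _ _ _ tab)))⟩
      · exact ⟨m + 1, n + 0, Or.inl (step_lemma huv m n 1 0 _ _ _ tbb)⟩
      · exact ⟨m + (-1), n + 0, Or.inr (Or.inl (step_lemma huv m n (-1) 0 _ _ _ tcb))⟩
  | mul_inv_cancel x hx y hy ih =>
    obtain ⟨m, n, H⟩ := ih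
    simp only [Set.mem_insert_iff, Set.mem_singleton_iff] at hy
    rcases hy with rfl | rfl
    · rcases H with rfl | rfl | rfl | rfl
      · exact ⟨m + 0, n + 0, Or.inr (Or.inl (step_lemma huv m n 0 0 _ _ _ t1a'))⟩
      · exact ⟨m + 0, n + 0, Or.inl (step_lemma huv m n 0 0 _ _ _ taa')⟩
      · exact ⟨m + 1, n + (-1), Or.inr (Or.inr (Or.inr (step_lemma huv m n 1 (-1) _ _ _ tba')))⟩
      · exact ⟨m + (-1), n + 1, Or.inr (Or.inr (Or.inl (step_lemma huv m n (-1) 1 _ _ _ tca')))⟩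
    · rcases H with rfl | rfl | rfl | rfl
      · exact ⟨m + (-1), n + 0, Or.inr (Or.inr (Or.inl (step_lemma huv m n (-1) 0 _ _ _ t1b')))⟩
      · exact ⟨m + 1, n + 0, Or.inr (Or.inr (Or.inr (step_lemma huv m n 1 0 _ _ _ tab')))⟩
      · exact ⟨m + 0, n + 0, Or.inl (step_lemma huv m n 0 0 _ _ _ tbb')⟩
      · exact ⟨m + 0, n + 0, Or.inr (Or.inl (step_lemma huv m n 0 0 _ _ _ tcb'))⟩

theorem σinj : Function.Injective σ3 := by
  rw [injective_iff_map_eq_one]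
  intro g hg
  obtain ⟨m, n, H⟩ := nf pg1 pg2 pg3 (hcl g)
  rcases H with H | H | H | H
  · subst H
    simp only [map_mul, map_zpow, map_pow, map_one, σof0, σof1] at hg
    simp only [pow_two] at hg
    rw [eU, eV] at hg
    have hp := DFunLike.congr_fun hg ((0:ℝ),(0:ℝ))
    simp only [mulap, oneap, pzs] at hp
    rw [Prod.mk.injEq] at hp
    obtain ⟨hp1, hp2⟩ := hp
    norm_num at hp1 hp2
    subst hp1
    have hn' : (n:ℝ) = 0 := by push_cast at hp2; linarith
    have hn : n = 0 := by exact_mod_cast hn'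
    subst hn
    simp
  · subst H
    simp only [map_mul, map_zpow, map_pow, map_one, σof0, σof1] at hg
    simp only [pow_two] at hg
    rw [eU, eV] at hg
    have hp := DFunLike.congr_fun hg ((0:ℝ),(0:ℝ))
    have hq := DFunLike.congr_fun hg ((1:ℝ),(0:ℝ))
    simp only [mulap, oneap, pzs, hA] at hp hq
    rw [Prod.mk.injEq] at hp hq
    obtain ⟨hp1, -⟩ := hp; obtain ⟨hq1, -⟩ := hq
    norm_num at hp1 hq1
    exfalso; subst hq1; norm_num at hp1
  · subst H
    simp only [map_mul, map_zpow, map_pow, map_one, σof0, σof1] at hg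
    simp only [pow_two] at hg
    rw [eU, eV] at hg
    have hp := DFunLike.congr_fun hg ((0:ℝ),(0:ℝ))
    simp only [mulap, oneap, pzs, hB] at hp
    rw [Prod.mk.injEq] at hp
    obtain ⟨hp1, -⟩ := hp
    exfalso
    have h2 : ((2*m+1 : ℤ):ℝ) = 0 := by push_cast; push_cast at hp1; linarith
    have h3 : (2*m+1 : ℤ) = 0 := by exact_mod_cast h2
    omega
  · subst H
    simp only [map_mul, map_zpow, map_pow, map_one, σof0, σof1] at hg
    simp only [pow_two] at hg
    rw [eU, eV] at hg
    have hp := DFunLike.congr_fun hg ((0:ℝ),(0:ℝ))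
    simp only [mulap, oneap, pzs, hA, hB] at hp
    rw [Prod.mk.injEq] at hp
    obtain ⟨hp1, -⟩ := hp
    exfalso
    have h2 : ((2*m+1 : ℤ):ℝ) = 0 := by push_cast; push_cast at hp1; linarith
    have h3 : (2*m+1 : ℤ) = 0 := by exact_mod_cast h2
    omega

end



/-- Let `G₃ = ⟨a, b | a² = (ab²)² = (bab)² = (b²a)² = 1⟩`.
The homomorphism `σ₃` from `G₃` to the group of affine equivalences of `ℝ²`
determined by `σ₃(a)(x,y) = (2 − x, 1 − y)`, `σ₃(b)(x,y) = (1 + x, 2 + x − y)`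
is well defined (the images satisfy the relators) and injective. -/
theorem stmt_4 :
    ∃ σ : PresentedGroup
        ({FreeGroup.of 0 ^ 2,
          (FreeGroup.of 0 * FreeGroup.of 1 ^ 2) ^ 2,
          (FreeGroup.of 1 * FreeGroup.of 0 * FreeGroup.of 1) ^ 2,
          (FreeGroup.of 1 ^ 2 * FreeGroup.of 0) ^ 2} :
          Set (FreeGroup (Fin 2))) →* ((ℝ × ℝ) ≃ᵃ[ℝ] (ℝ × ℝ)),
      (∀ p : ℝ × ℝ, σ (PresentedGroup.of 0) p = (2 - p.1, 1 - p.2)) ∧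
      (∀ p : ℝ × ℝ, σ (PresentedGroup.of 1) p = (1 + p.1, 2 + p.1 - p.2)) ∧
      Function.Injective σ := by
  refine ⟨σ3, fun p => ?_, fun p => ?_, σinj⟩
  · rw [σof0]; exact hA p
  · rw [σof1]; exact hB p
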